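/- arXiv:1910.12160 — 3 statements merged into one kernel-verified Lean document; each statement's English description precedes it below -/
import Mathlib

section
/- Let k be a field, H a group, and V a module over the group algebra k[H]. Suppose V has a k[H]-submodule V1 such that: V1 and V2 := V/V1 are simple k[H]-modules; V1 and V2 are not isomorphic; every k[H]-module endomorphism of V1 is multiplication by a scalar in k, and likewise every k[H]-module endomorphism of V2 is multiplication by a scalar in k; and the extension does not split, i.e. V1 has no k[H]-module complement in V (equivalently V is not semisimple). Then every k[H]-module endomorphism of V is multiplication by a scalar in k, i.e. End_{k[H]}(V) = k. -/
/-!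
An endomorphism `f` of `V` must preserve `V₁`, since by Schur's lemma there is no nonzero map
`V₁ → V/V₁`. So `f` acts by scalars `c` on `V₁` and `d` on `V/V₁`. If `c ≠ d`, then
`(c - d)⁻¹ (f - d)` is a projection of `V` onto `V₁`, whose kernel would split the extension.
Hence `c = d`, and `f - c` factors through a map `V/V₁ → V₁`, which vanishes by Schur's lemma.
-/

theorem LinearMap.eq_zero_of_isEmpty_linearEquiv {R M N : Type*} [Ring R] [AddCommGroup M]
    [Module R M] [AddCommGroup N] [Module R N] [IsSimpleModule R M] [IsSimpleModule R N]
    (h : IsEmpty (M ≃ₗ[R] N)) (f : M →ₗ[R] N) : f = 0 :=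
  f.bijective_or_eq_zero.resolve_left fun hf => h.elim (.ofBijective f hf)

namespace Submodule

section Ring

variable {R M : Type*} [Ring R] [AddCommGroup M] [Module R M] (p : Submodule R M)
  [IsSimpleModule R p] [IsSimpleModule R (M ⧸ p)]

theorem le_comap_of_isEmpty_linearEquiv_quotient (h : IsEmpty (p ≃ₗ[R] M ⧸ p))
    (f : M →ₗ[R] M) : p ≤ p.comap f := by
  intro x hx
  have := LinearMap.congr_fun ((p.mkQ ∘ₗ f ∘ₗ p.subtype).eq_zero_of_isEmpty_linearEquiv h) ⟨x, hx⟩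
  simpa [Quotient.mk_eq_zero] using this

theorem eq_zero_of_range_le_of_le_ker (h : IsEmpty (p ≃ₗ[R] M ⧸ p)) {g : M →ₗ[R] M}
    (hrange : ∀ x, g x ∈ p) (hker : p ≤ LinearMap.ker g) : g = 0 := by
  have hbar : p.liftQ (g.codRestrict p hrange) (by rwa [LinearMap.ker_codRestrict]) = 0 :=
    LinearMap.eq_zero_of_isEmpty_linearEquiv ⟨fun e => h.elim e.symm⟩ _
  ext x
  simpa using congrArg Subtype.val (LinearMap.congr_fun hbar (p.mkQ x))

end Ring

variable {k A V : Type*} [Field k] [Ring A] [Algebra k A] [AddCommGroup V] [Module A V]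
  [Module k V] [IsScalarTower k A V] {p : Submodule A V}

theorem exists_isCompl_of_range_le_of_eq_smul {g : V →ₗ[A] V} {e : k} (he : e ≠ 0)
    (hrange : ∀ x, g x ∈ p) (hp : ∀ x ∈ p, g x = e • x) : ∃ U : Submodule A V, IsCompl p U := by
  refine ⟨_, LinearMap.isCompl_of_proj (f := (e⁻¹ • g).codRestrict p
    fun x => p.smul_of_tower_mem e⁻¹ (hrange x)) fun x => ?_⟩
  ext
  simp [hp x x.2, smul_smul, inv_mul_cancel₀ he]

end Submodule

open Submodule in
/-- Let `k` be a field, `H` a group and `V` a `k[H]`-module with a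
submodule `V₁` such that `V₁` and `V₂ := V/V₁` are simple, non-isomorphic, both with only
scalar endomorphisms, and such that `V₁` has no `k[H]`-module complement in `V`.
Then every `k[H]`-endomorphism of `V` is multiplication by a scalar in `k`. -/
theorem end_eq_scalars_of_nonsplit_extension
    (k : Type) [Field k] (H : Type) [Group H]
    (V : Type) [AddCommGroup V] [Module (MonoidAlgebra k H) V]
    [Module k V] [IsScalarTower k (MonoidAlgebra k H) V]
    (V₁ : Submodule (MonoidAlgebra k H) V)
    (hsimple₁ : IsSimpleModule (MonoidAlgebra k H) V₁)
    (hsimple₂ : IsSimpleModule (MonoidAlgebra k H) (V ⧸ V₁))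
    (hnoniso : IsEmpty (V₁ ≃ₗ[MonoidAlgebra k H] V ⧸ V₁))
    (hend₁ : ∀ f : V₁ →ₗ[MonoidAlgebra k H] V₁, ∃ c : k, ∀ x : V₁, f x = c • x)
    (hend₂ : ∀ f : (V ⧸ V₁) →ₗ[MonoidAlgebra k H] (V ⧸ V₁), ∃ c : k, ∀ x, f x = c • x)
    (hnonsplit : ¬ ∃ U : Submodule (MonoidAlgebra k H) V, IsCompl V₁ U) :
    ∀ f : V →ₗ[MonoidAlgebra k H] V, ∃ c : k, ∀ x : V, f x = c • x := by
  intro f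
  have hf := V₁.le_comap_of_isEmpty_linearEquiv_quotient hnoniso f
  obtain ⟨c, hc⟩ := hend₁ (f.restrict hf)
  obtain ⟨d, hd⟩ := hend₂ (V₁.mapQ V₁ f hf)
  set g := f - d • LinearMap.id
  have hrange : ∀ x, g x ∈ V₁ := fun x => by
    simpa [g, ← Quotient.mk_eq_zero, Quotient.mk_smul, sub_eq_zero] using hd (V₁.mkQ x)
  have hg : ∀ x ∈ V₁, g x = (c - d) • x := fun x hx => by
    simpa [g, sub_smul] using congrArg Subtype.val (hc ⟨x, hx⟩)
  obtain rfl : c = d := by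
    by_contra hcd
    exact hnonsplit (exists_isCompl_of_range_le_of_eq_smul (sub_ne_zero.2 hcd) hrange hg)
  have hg0 : g = 0 := V₁.eq_zero_of_range_le_of_le_ker hnoniso hrange fun x hx => by
    simp [hg x hx]
  exact ⟨c, fun x => by simpa [g, sub_eq_zero] using LinearMap.congr_fun hg0 x⟩
end

section
/- Let K be a field of characteristic 0 with algebraic closure L, let G be a finite group, and let V be a finite-dimensional representation of G over K. Suppose W1 and W2 are irreducible, pairwise non-isomorphic finite-dimensional representations of G over L whose characters χ1 and χ2 take all their values in (the image of) K, and suppose that the character of the base-changed representation V ⊗_K L equals χ1 + χ2. Then V decomposes as a direct sum of K[G]-submodules V = V+ ⊕ V−, where the character of V+ equals χ1 and the character of V− equals χ2 (i.e. V+ ⊗_K L ≅ W1 and V− ⊗_K L ≅ W2). -/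
open LinearMap Module TensorProduct

section Aux

variable {L : Type} [Field L] {G : Type} [Group G]
variable {W W' : Type} [AddCommGroup W] [Module L W] [AddCommGroup W'] [Module L W']

private lemma schur_scalar [IsAlgClosed L] [FiniteDimensional L W] [Nontrivial W]
    (σ : Representation L G W)
    (hirr : ∀ U : Submodule L W, (∀ g : G, ∀ x ∈ U, σ g x ∈ U) → U = ⊥ ∨ U = ⊤)
    (f : W →ₗ[L] W) (hf : ∀ (g : G) (x : W), f (σ g x) = σ g (f x)) :
    ∃ μ : L, f = μ • (1 : Module.End L W) := by
  obtain ⟨μ, hμ⟩ := Module.End.exists_eigenvalue f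
  refine ⟨μ, ?_⟩
  have hstab : ∀ g : G, ∀ x ∈ Module.End.eigenspace f μ, σ g x ∈ Module.End.eigenspace f μ := by
    intro g x hx
    rw [Module.End.mem_eigenspace_iff] at hx ⊢
    rw [hf, hx, map_smul]
  rcases hirr _ hstab with h | h
  · exact absurd h hμ
  · ext x
    have hx : x ∈ Module.End.eigenspace f μ := h ▸ Submodule.mem_top
    rw [Module.End.mem_eigenspace_iff] at hx
    simpa using hx

private lemma schur_zero [Nontrivial W] (σ : Representation L G W) (σ' : Representation L G W')
    (hirr : ∀ U : Submodule L W, (∀ g : G, ∀ x ∈ U, σ g x ∈ U) → U = ⊥ ∨ U = ⊤)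
    (hirr' : ∀ U : Submodule L W', (∀ g : G, ∀ x ∈ U, σ' g x ∈ U) → U = ⊥ ∨ U = ⊤)
    (hniso : ¬ ∃ e : W ≃ₗ[L] W', ∀ (g : G) (x : W), e (σ g x) = σ' g (e x))
    (f : W →ₗ[L] W') (hf : ∀ (g : G) (x : W), f (σ g x) = σ' g (f x)) : f = 0 := by
  rcases hirr (LinearMap.ker f) (fun g x hx => by
      rw [LinearMap.mem_ker] at hx ⊢
      rw [hf, hx, map_zero]) with hk | hk
  · rcases hirr' (LinearMap.range f) (fun g y hy => by
        obtain ⟨x, rfl⟩ := hy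
        exact ⟨σ g x, hf g x⟩) with hr | hr
    · exact LinearMap.range_eq_bot.mp hr
    · exfalso
      refine hniso ⟨LinearEquiv.ofBijective f ⟨LinearMap.ker_eq_bot.mp hk, LinearMap.range_eq_top.mp hr⟩, fun g x => hf g x⟩
  · exact LinearMap.ker_eq_top.mp hk

private lemma trace_eq_sum_repr {ι : Type*} [Fintype ι] [DecidableEq ι]
    (b : Basis ι L W) (f : W →ₗ[L] W) :
    trace L W f = ∑ i, b.repr (f (b i)) i := by
  rw [trace_eq_matrix_trace L b f, Matrix.trace]
  simp [Matrix.diag, LinearMap.toMatrix_apply]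

end Aux


section Aux3

variable {L : Type} [Field L] {G : Type} [Group G] [Fintype G]
variable {W W' : Type} [AddCommGroup W] [Module L W] [AddCommGroup W'] [Module L W']

private lemma trace_eq_sum_repr' {ι : Type*} [Fintype ι] [DecidableEq ι]
    (b : Basis ι L W) (f : W →ₗ[L] W) :
    trace L W f = ∑ i, b.repr (f (b i)) i := by
  rw [trace_eq_matrix_trace L b f, Matrix.trace]
  simp [Matrix.diag, LinearMap.toMatrix_apply]

private lemma sum_trace_smul_eq {ι : Type} [Fintype ι] [DecidableEq ι]
    (b : Basis ι L W) (σ : Representation L G W) (σ' : Representation L G W') (y : W') :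
    ∑ g : G, (trace L W (σ g⁻¹)) • σ' g y
      = ∑ i, (∑ g : G, σ' g ∘ₗ ((b.coord i).smulRight y) ∘ₗ σ g⁻¹) (b i) := by
  simp only [LinearMap.sum_apply, LinearMap.comp_apply, smulRight_apply, map_smul,
    Basis.coord_apply]
  rw [Finset.sum_comm]
  refine Finset.sum_congr rfl fun g _ => ?_
  rw [← Finset.sum_smul, trace_eq_sum_repr' b]

private lemma trace_T (σ : Representation L G W) [FiniteDimensional L W]
    (E : W →ₗ[L] W) :
    trace L W (∑ g : G, σ g ∘ₗ E ∘ₗ σ g⁻¹) = (Fintype.card G : L) * trace L W E := by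
  rw [map_sum]
  have : ∀ g : G, trace L W (σ g ∘ₗ E ∘ₗ σ g⁻¹) = trace L W E := by
    intro g
    have : σ g ∘ₗ E ∘ₗ σ g⁻¹ = σ g * (E * σ g⁻¹) := rfl
    rw [this, trace_mul_comm, mul_assoc, ← map_mul, inv_mul_cancel, map_one, mul_one]
  simp [this, Finset.sum_const, nsmul_eq_mul, Finset.card_univ]

private lemma trace_coord_smulRight {ι : Type} [Fintype ι] [DecidableEq ι]
    (b : Basis ι L W) (i : ι) (y : W) :
    trace L W ((b.coord i).smulRight y) = b.repr y i := by
  rw [trace_eq_sum_repr' b]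
  simp only [smulRight_apply, Basis.coord_apply, Basis.repr_self, map_smul]
  rw [Finset.sum_eq_single i]
  · simp
  · intro j _ hj
    simp [Finsupp.single_apply, hj]
  · simp

private lemma T_equivariant' (σ : Representation L G W) (σ' : Representation L G W')
    (E : W →ₗ[L] W') (h : G) (x : W) :
    (∑ g : G, σ' g ∘ₗ E ∘ₗ σ g⁻¹) (σ h x) = σ' h ((∑ g : G, σ' g ∘ₗ E ∘ₗ σ g⁻¹) x) := by
  simp only [LinearMap.sum_apply, LinearMap.comp_apply, map_sum]
  refine Fintype.sum_equiv (Equiv.mulLeft h⁻¹) _ _ fun g => ?_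
  have h1 : σ g⁻¹ (σ h x) = σ (g⁻¹ * h) x := by rw [map_mul]; rfl
  have h2 : ∀ y, σ' h (σ' (h⁻¹ * g) y) = σ' g y := by
    intro y
    rw [← Module.End.mul_apply, ← map_mul, mul_inv_cancel_left]
  have h3 : (h⁻¹ * g)⁻¹ = g⁻¹ * h := by rw [mul_inv_rev, inv_inv]
  simp only [Equiv.coe_mulLeft]
  rw [h3, ← h1, h2]

/-- The central element `∑ χ(g⁻¹) σ(g)` acts as `|G|/dim` on the irreducible `W`. -/
private lemma Z_self [IsAlgClosed L] [CharZero L] [FiniteDimensional L W] [Nontrivial W]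
    (σ : Representation L G W)
    (hirr : ∀ U : Submodule L W, (∀ g : G, ∀ x ∈ U, σ g x ∈ U) → U = ⊥ ∨ U = ⊤) :
    ∑ g : G, (trace L W (σ g⁻¹)) • σ g
      = ((Fintype.card G : L) / (finrank L W : L)) • (1 : Module.End L W) := by
  classical
  have hd : (finrank L W : L) ≠ 0 := Nat.cast_ne_zero.mpr Module.finrank_pos.ne'
  set b := Module.finBasis L W with hb
  ext y
  have key := sum_trace_smul_eq b σ σ y
  simp only [LinearMap.sum_apply, LinearMap.smul_apply, Module.End.one_apply] at key ⊢
  rw [key]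
  have hT : ∀ i, (∑ g : G, σ g ∘ₗ ((b.coord i).smulRight y) ∘ₗ σ g⁻¹)
      = ((((Fintype.card G : L) / (finrank L W : L)) * b.repr y i) • (1 : Module.End L W)) := by
    intro i
    obtain ⟨μ, hμ⟩ := schur_scalar σ hirr _ (fun g x => T_equivariant' σ σ ((b.coord i).smulRight y) g x)
    rw [hμ]
    congr 1
    have h1 := trace_T σ ((b.coord i).smulRight y)
    rw [hμ, map_smul, trace_one, smul_eq_mul, trace_coord_smulRight] at h1
    rw [div_mul_eq_mul_div, eq_div_iff hd]
    exact h1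
  have hT' : ∀ i, ∑ g : G, (σ g ∘ₗ ((b.coord i).smulRight y) ∘ₗ σ g⁻¹) (b i)
      = (((Fintype.card G : L) / (finrank L W : L)) * b.repr y i) • b i := by
    intro i
    have h2 := congrArg (fun F : Module.End L W => F (b i)) (hT i)
    simpa only [LinearMap.sum_apply, LinearMap.smul_apply, Module.End.one_apply] using h2
  rw [Finset.sum_congr rfl (fun i _ => hT' i)]
  calc ∑ i, (((Fintype.card G : L) / (finrank L W : L)) * b.repr y i) • b i
      = ((Fintype.card G : L) / (finrank L W : L)) • ∑ i, b.repr y i • b i := by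
        rw [Finset.smul_sum]
        simp [mul_smul]
    _ = ((Fintype.card G : L) / (finrank L W : L)) • y := by rw [Basis.sum_repr]

/-- The element `∑ χ(g⁻¹) σ'(g)` acts as zero on a non-isomorphic irreducible. -/
private lemma Z_other [FiniteDimensional L W] [Nontrivial W]
    (σ : Representation L G W) (σ' : Representation L G W')
    (hirr : ∀ U : Submodule L W, (∀ g : G, ∀ x ∈ U, σ g x ∈ U) → U = ⊥ ∨ U = ⊤)
    (hirr' : ∀ U : Submodule L W', (∀ g : G, ∀ x ∈ U, σ' g x ∈ U) → U = ⊥ ∨ U = ⊤)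
    (hniso : ¬ ∃ e : W ≃ₗ[L] W', ∀ (g : G) (x : W), e (σ g x) = σ' g (e x)) :
    ∑ g : G, (trace L W (σ g⁻¹)) • σ' g = 0 := by
  classical
  ext y
  have key := sum_trace_smul_eq (Module.finBasis L W) σ σ' y
  simp only [LinearMap.sum_apply, LinearMap.smul_apply, LinearMap.zero_apply] at key ⊢
  rw [key]
  refine Finset.sum_eq_zero fun i _ => ?_
  have h2 := congrArg (fun F : W →ₗ[L] W' => F ((Module.finBasis L W) i))
    (schur_zero σ σ' hirr hirr' hniso _
      (fun g x => T_equivariant' σ σ' (((Module.finBasis L W).coord i).smulRight y) g x))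
  simpa only [LinearMap.sum_apply, LinearMap.zero_apply] using h2

end Aux3
section Aux4

variable {L : Type} [Field L] {G : Type} [Group G] [Fintype G]
variable {W W' : Type} [AddCommGroup W] [Module L W] [AddCommGroup W'] [Module L W']

private lemma key_self [IsAlgClosed L] [CharZero L] [FiniteDimensional L W] [Nontrivial W]
    (σ : Representation L G W)
    (hirr : ∀ U : Submodule L W, (∀ g : G, ∀ x ∈ U, σ g x ∈ U) → U = ⊥ ∨ U = ⊤) (k : G) :
    ∑ g : G, trace L W (σ g⁻¹) * trace L W (σ (k * g))
      = ((Fintype.card G : L) / (finrank L W : L)) * trace L W (σ k) := by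
  have h := congrArg (fun F : Module.End L W => trace L W (σ k * F)) (Z_self σ hirr)
  simp only [Finset.mul_sum, mul_smul_comm, mul_one, map_sum, map_smul, smul_eq_mul] at h
  calc ∑ g : G, trace L W (σ g⁻¹) * trace L W (σ (k * g))
      = ∑ g : G, trace L W (σ g⁻¹) * trace L W (σ k * σ g) := by
        refine Finset.sum_congr rfl fun g _ => ?_
        rw [map_mul σ k g]
    _ = ((Fintype.card G : L) / (finrank L W : L)) * trace L W (σ k) := h

private lemma key_other [FiniteDimensional L W] [Nontrivial W] [FiniteDimensional L W']
    (σ : Representation L G W) (σ' : Representation L G W')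
    (hirr : ∀ U : Submodule L W, (∀ g : G, ∀ x ∈ U, σ g x ∈ U) → U = ⊥ ∨ U = ⊤)
    (hirr' : ∀ U : Submodule L W', (∀ g : G, ∀ x ∈ U, σ' g x ∈ U) → U = ⊥ ∨ U = ⊤)
    (hniso : ¬ ∃ e : W ≃ₗ[L] W', ∀ (g : G) (x : W), e (σ g x) = σ' g (e x)) (k : G) :
    ∑ g : G, trace L W (σ g⁻¹) * trace L W' (σ' (k * g)) = 0 := by
  have h := congrArg (fun F : Module.End L W' => trace L W' (σ' k * F))
    (Z_other σ σ' hirr hirr' hniso)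
  simp only [Finset.mul_sum, mul_smul_comm, mul_zero, map_zero, map_sum, map_smul,
    smul_eq_mul] at h
  calc ∑ g : G, trace L W (σ g⁻¹) * trace L W' (σ' (k * g))
      = ∑ g : G, trace L W (σ g⁻¹) * trace L W' (σ' k * σ' g) := by
        refine Finset.sum_congr rfl fun g _ => ?_
        rw [map_mul σ' k g]
    _ = 0 := h

end Aux4

section BC

private lemma baseChange_inj (K L V : Type) [Field K] [Field L] [Algebra K L]
    [AddCommGroup V] [Module K V] :
    Function.Injective (fun f : V →ₗ[K] V => f.baseChange L) := by
  intro f g h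
  ext v
  have h1 : f.baseChange L ((1 : L) ⊗ₜ[K] v) = g.baseChange L ((1 : L) ⊗ₜ[K] v) := by
    simp only at h
    rw [h]
  rw [LinearMap.baseChange_tmul, LinearMap.baseChange_tmul] at h1
  let b := Basis.ofVectorSpace K V
  have h2 := congrArg (b.baseChange L).repr h1
  refine b.repr.injective (Finsupp.ext fun i => ?_)
  have h3 := congrFun (congrArg DFunLike.coe h2) i
  simp only [Basis.baseChange_repr_tmul] at h3
  have h4 : ∀ x : V, b.repr x i • (1 : L) = algebraMap K L (b.repr x i) := by
    intro x
    rw [Algebra.smul_def, mul_one]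
  rw [h4, h4] at h3
  exact (algebraMap K L).injective h3

end BC

/-- Let `K` be a field of characteristic `0` with algebraic closure `L`,
`G` a finite group, `V` a finite-dimensional representation of `G` over `K`, and `W₁`,
`W₂` irreducible non-isomorphic finite-dimensional representations of `G` over `L` whose
characters take values in `K` and whose sum is the character of `V ⊗_K L`.  Then `V`
decomposes as a direct sum of `G`-stable subspaces `V = Vplus ⊕ Vminus` whose characters are the
characters of `W₁` and of `W₂` respectively. -/
theorem decomposition_from_character_sum
    (K L : Type) [Field K] [CharZero K] [Field L] [Algebra K L] [IsAlgClosure K L]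
    (G : Type) [Group G] [Finite G]
    (V : Type) [AddCommGroup V] [Module K V] [FiniteDimensional K V]
    (ρ : Representation K G V)
    (W₁ W₂ : Type) [AddCommGroup W₁] [Module L W₁] [FiniteDimensional L W₁] [Nontrivial W₁]
    [AddCommGroup W₂] [Module L W₂] [FiniteDimensional L W₂] [Nontrivial W₂]
    (σ₁ : Representation L G W₁) (σ₂ : Representation L G W₂)
    (hirr₁ : ∀ U : Submodule L W₁, (∀ g : G, ∀ x ∈ U, σ₁ g x ∈ U) → U = ⊥ ∨ U = ⊤)
    (hirr₂ : ∀ U : Submodule L W₂, (∀ g : G, ∀ x ∈ U, σ₂ g x ∈ U) → U = ⊥ ∨ U = ⊤)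
    (hniso : ¬ ∃ e : W₁ ≃ₗ[L] W₂, ∀ (g : G) (x : W₁), e (σ₁ g x) = σ₂ g (e x))
    (hval₁ : ∀ g : G, LinearMap.trace L W₁ (σ₁ g) ∈ (algebraMap K L).range)
    (hval₂ : ∀ g : G, LinearMap.trace L W₂ (σ₂ g) ∈ (algebraMap K L).range)
    (hchar : ∀ g : G, algebraMap K L (LinearMap.trace K V (ρ g)) =
      LinearMap.trace L W₁ (σ₁ g) + LinearMap.trace L W₂ (σ₂ g)) :
    ∃ (Vplus Vminus : Submodule K V) (hplus : ∀ g : G, ∀ x ∈ Vplus, ρ g x ∈ Vplus)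
      (hminus : ∀ g : G, ∀ x ∈ Vminus, ρ g x ∈ Vminus),
      IsCompl Vplus Vminus ∧
      (∀ g : G, algebraMap K L (LinearMap.trace K Vplus ((ρ g).restrict (hplus g))) =
        LinearMap.trace L W₁ (σ₁ g)) ∧
      (∀ g : G, algebraMap K L (LinearMap.trace K Vminus ((ρ g).restrict (hminus g))) =
        LinearMap.trace L W₂ (σ₂ g)) := by
  classical
  have : Fintype G := Fintype.ofFinite G
  have hCZ : CharZero L := charZero_of_injective_algebraMap (algebraMap K L).injective
  have hAC : IsAlgClosed L := IsAlgClosure.isAlgClosed K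
  have hdL : ((finrank L W₁ : L)) ≠ 0 := Nat.cast_ne_zero.mpr Module.finrank_pos.ne'
  have hcL : ((Fintype.card G : L)) ≠ 0 := Nat.cast_ne_zero.mpr Fintype.card_ne_zero
  choose c hc using fun g => RingHom.mem_range.mp (hval₁ g)
  -- `c` is a class function
  have hc_conj : ∀ h x : G, c (h⁻¹ * x * h) = c x := by
    intro h x
    apply (algebraMap K L).injective
    rw [hc, hc]
    have h5 : σ₁ (h⁻¹ * x * h) = σ₁ h⁻¹ * (σ₁ x * σ₁ h) := by
      rw [← map_mul, ← map_mul, mul_assoc]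
    rw [h5, LinearMap.trace_mul_comm, mul_assoc, ← map_mul σ₁ h h⁻¹, mul_inv_cancel, map_one,
      mul_one]
  set e₀ : Module.End K V := ∑ g : G, c g⁻¹ • ρ g with he₀
  set s : K := (finrank L W₁ : K) / (Fintype.card G : K) with hs
  set e : Module.End K V := s • e₀ with he
  -- `e` commutes with the representation
  have hcomm : ∀ h : G, ρ h * e = e * ρ h := by
    intro h
    suffices h0 : ρ h * e₀ = e₀ * ρ h by
      rw [he, mul_smul_comm, smul_mul_assoc, h0]
    rw [he₀, Finset.mul_sum, Finset.sum_mul]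
    refine Fintype.sum_equiv ((Equiv.mulLeft h).trans (Equiv.mulRight h⁻¹)) _ _ fun g => ?_
    simp only [Equiv.trans_apply, Equiv.coe_mulLeft, Equiv.coe_mulRight]
    have e1 : (h * g * h⁻¹)⁻¹ = h⁻¹⁻¹ * g⁻¹ * h⁻¹ := by simp [mul_inv_rev, mul_assoc]
    have e2 : h * g * h⁻¹ * h = h * g := by simp [mul_assoc]
    rw [mul_smul_comm, smul_mul_assoc, ← map_mul, ← map_mul, e2, e1, hc_conj]
  -- base change of `e`
  set Z : Module.End L (L ⊗[K] V) :=
    ∑ g : G, LinearMap.trace L W₁ (σ₁ g⁻¹) • (ρ g).baseChange L with hZ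
  have hτmul : ∀ g h : G, (ρ g).baseChange L * (ρ h).baseChange L = (ρ (g * h)).baseChange L := by
    intro g h
    rw [← LinearMap.baseChange_mul, ← map_mul]
  have hτtr : ∀ g : G,
      LinearMap.trace L _ ((ρ g).baseChange L)
        = LinearMap.trace L W₁ (σ₁ g) + LinearMap.trace L W₂ (σ₂ g) := by
    intro g
    rw [LinearMap.trace_baseChange, hchar]
  have hbc : e.baseChange L = ((finrank L W₁ : L) / (Fintype.card G : L)) • Z := by
    rw [he, LinearMap.baseChange_smul, he₀]
    have hsum : e₀.baseChange L = ∑ g : G, c g⁻¹ • (ρ g).baseChange L := by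
      rw [he₀]
      have := map_sum (LinearMap.baseChangeHom K L V V) (fun g : G => c g⁻¹ • ρ g) Finset.univ
      simpa only [LinearMap.baseChangeHom_apply, map_smul] using this
    rw [← he₀, hsum, hZ]
    have hterm : ∀ g : G, c g⁻¹ • (ρ g).baseChange L
        = (LinearMap.trace L W₁ (σ₁ g⁻¹) : L) • (ρ g).baseChange L := by
      intro g
      rw [← hc, algebraMap_smul]
    rw [Finset.sum_congr rfl fun g _ => hterm g]
    rw [← algebraMap_smul L s, hs, map_div₀, map_natCast, map_natCast]
  -- idempotency
  have hZZ : Z * Z = ((Fintype.card G : L) / (finrank L W₁ : L)) • Z := by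
    have expand : Z * Z = ∑ g : G, ∑ k : G,
        (LinearMap.trace L W₁ (σ₁ g⁻¹) * LinearMap.trace L W₁ (σ₁ (k⁻¹ * g)))
          • (ρ k).baseChange L := by
      rw [hZ, Finset.sum_mul]
      refine Finset.sum_congr rfl fun g _ => ?_
      rw [smul_mul_assoc, Finset.mul_sum]
      have h6 : ∀ h : G,
          (ρ g).baseChange L * (LinearMap.trace L W₁ (σ₁ h⁻¹) • (ρ h).baseChange L)
            = LinearMap.trace L W₁ (σ₁ h⁻¹) • (ρ (g * h)).baseChange L := by
        intro h
        rw [mul_smul_comm, hτmul]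
      rw [Finset.sum_congr rfl fun h _ => h6 h, Finset.smul_sum]
      refine Fintype.sum_equiv (Equiv.mulLeft g) _ _ fun h => ?_
      simp only [Equiv.coe_mulLeft, smul_smul]
      congr 2
      rw [mul_inv_rev, inv_mul_cancel_right]
    rw [expand, Finset.sum_comm]
    have h7 : ∀ k : G, ∑ g : G,
        (LinearMap.trace L W₁ (σ₁ g⁻¹) * LinearMap.trace L W₁ (σ₁ (k⁻¹ * g)))
          • (ρ k).baseChange L
        = (((Fintype.card G : L) / (finrank L W₁ : L)) * LinearMap.trace L W₁ (σ₁ k⁻¹))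
          • (ρ k).baseChange L := by
      intro k
      rw [← Finset.sum_smul, key_self σ₁ hirr₁ k⁻¹]
    rw [Finset.sum_congr rfl fun k _ => h7 k, hZ, Finset.smul_sum]
    refine Finset.sum_congr rfl fun k _ => ?_
    rw [smul_smul]
  have hee : e * e = e := by
    apply baseChange_inj K L V
    show (e * e).baseChange L = e.baseChange L
    rw [LinearMap.baseChange_mul, hbc, smul_mul_assoc, mul_smul_comm, hZZ, smul_smul, smul_smul]
    congr 1
    field_simp
  have hfix : ∀ x : V, x ∈ LinearMap.range e → e x = x := by
    rintro x ⟨y, rfl⟩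
    conv_lhs => rw [← Module.End.mul_apply, hee]
  have hplus : ∀ g : G, ∀ x ∈ LinearMap.range e, ρ g x ∈ LinearMap.range e := by
    intro g x hx
    refine ⟨ρ g x, ?_⟩
    rw [← Module.End.mul_apply, ← hcomm g, Module.End.mul_apply, hfix x hx]
  have hminus : ∀ g : G, ∀ x ∈ LinearMap.ker e, ρ g x ∈ LinearMap.ker e := by
    intro g x hx
    rw [LinearMap.mem_ker] at hx ⊢
    rw [← Module.End.mul_apply, ← hcomm g, Module.End.mul_apply, hx, map_zero]
  have hIsCompl : IsCompl (LinearMap.range e) (LinearMap.ker e) := by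
    constructor
    · refine Submodule.disjoint_def.mpr fun x hx hk => ?_
      rw [← hfix x hx]
      exact LinearMap.mem_ker.mp hk
    · rw [codisjoint_iff]
      refine Submodule.eq_top_iff'.mpr fun x => ?_
      refine Submodule.mem_sup.mpr ⟨e x, ⟨x, rfl⟩, x - e x, ?_, by abel⟩
      rw [LinearMap.mem_ker, map_sub, ← Module.End.mul_apply, hee, sub_self]
  -- the key trace computation
  have htr_plus : ∀ g : G,
      algebraMap K L (LinearMap.trace K V (ρ g * e)) = LinearMap.trace L W₁ (σ₁ g) := by
    intro g
    rw [← LinearMap.trace_baseChange (ρ g * e) L, LinearMap.baseChange_mul, hbc, mul_smul_comm,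
      map_smul, smul_eq_mul]
    have h8 : (ρ g).baseChange L * Z
        = ∑ h : G, LinearMap.trace L W₁ (σ₁ h⁻¹) • (ρ (g * h)).baseChange L := by
      rw [hZ, Finset.mul_sum]
      refine Finset.sum_congr rfl fun h _ => ?_
      rw [mul_smul_comm, hτmul]
    rw [h8, map_sum]
    simp only [map_smul, smul_eq_mul, hτtr]
    have h9 : ∑ h : G, LinearMap.trace L W₁ (σ₁ h⁻¹)
          * (LinearMap.trace L W₁ (σ₁ (g * h)) + LinearMap.trace L W₂ (σ₂ (g * h)))
        = (∑ h : G, LinearMap.trace L W₁ (σ₁ h⁻¹) * LinearMap.trace L W₁ (σ₁ (g * h)))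
          + ∑ h : G, LinearMap.trace L W₁ (σ₁ h⁻¹) * LinearMap.trace L W₂ (σ₂ (g * h)) := by
      rw [← Finset.sum_add_distrib]
      exact Finset.sum_congr rfl fun h _ => mul_add _ _ _
    rw [h9, key_self σ₁ hirr₁ g, key_other σ₁ σ₂ hirr₁ hirr₂ hniso g, add_zero, ← mul_assoc,
      div_mul_div_cancel₀, div_self hdL, one_mul]
    exact hcL
  refine ⟨LinearMap.range e, LinearMap.ker e, hplus, hminus, hIsCompl, ?_, ?_⟩
  · intro g
    have hmem : ∀ x : V, (ρ g * e) x ∈ LinearMap.range e := fun x => hplus g (e x) ⟨x, rfl⟩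
    have hres := LinearMap.trace_restrict_eq_of_forall_mem (LinearMap.range e) (ρ g * e) hmem
    have heq : (ρ g * e).restrict (fun x hx => hmem x) = (ρ g).restrict (hplus g) := by
      refine LinearMap.ext fun x => Subtype.ext ?_
      rw [LinearMap.restrict_coe_apply, LinearMap.restrict_coe_apply, Module.End.mul_apply,
        hfix _ x.2]
    rw [← heq, hres]
    exact htr_plus g
  · intro g
    have hmem : ∀ x : V, (ρ g * (1 - e)) x ∈ LinearMap.ker e := by
      intro x
      have h1 : e ((1 - e) x) = 0 := by
        rw [LinearMap.sub_apply, Module.End.one_apply, map_sub, ← Module.End.mul_apply e e, hee,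
          sub_self]
      rw [LinearMap.mem_ker, Module.End.mul_apply, ← Module.End.mul_apply e (ρ g), ← hcomm g,
        Module.End.mul_apply, h1, map_zero]
    have hres := LinearMap.trace_restrict_eq_of_forall_mem (LinearMap.ker e) (ρ g * (1 - e)) hmem
    have heq : (ρ g * (1 - e)).restrict (fun x hx => hmem x) = (ρ g).restrict (hminus g) := by
      refine LinearMap.ext fun x => Subtype.ext ?_
      rw [LinearMap.restrict_coe_apply, LinearMap.restrict_coe_apply, Module.End.mul_apply,
        LinearMap.sub_apply, Module.End.one_apply, LinearMap.mem_ker.mp x.2, sub_zero]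
    rw [← heq, hres]
    have h2 : LinearMap.trace K V (ρ g * (1 - e))
        = LinearMap.trace K V (ρ g) - LinearMap.trace K V (ρ g * e) := by
      rw [mul_sub, mul_one, map_sub]
    rw [h2, map_sub, htr_plus g, hchar g]
    ring
end

section
/- Let p be a prime, s a positive integer, k = F_{p^s} and W = W(k) the ring of Witt vectors over k. Let W ×_k W denote the subring of W × W consisting of pairs (a, b) with a ≡ b mod (p). Suppose S is a subring of W ×_k W that contains the diagonal {(w, w) : w ∈ W}, is stable under multiplication by diagonal elements (i.e. S is a W-submodule for the diagonal W-action), and contains some element (a, b) with a − b = p. Then S = W ×_k W. -/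
theorem Prod.eq_diag_mul_add_diag_of_sub_eq {R : Type*} [CommRing R] {a x : R × R} {c : R}
    (h : x.1 - x.2 = c * (a.1 - a.2)) :
    x = (c, c) * a + (x.2 - c * a.2, x.2 - c * a.2) := by
  ext
  · simp only [Prod.fst_add, Prod.fst_mul]
    linear_combination h
  · simp

theorem Subring.mem_of_sub_mem_span_singleton {R : Type*} [CommRing R] {π : R}
    {S : Subring (R × R)} (hdiag : ∀ w : R, (w, w) ∈ S)
    (hstab : ∀ w : R, ∀ x ∈ S, (w, w) * x ∈ S) {a : R × R} (ha : a ∈ S)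
    (hab : a.1 - a.2 = π) {x : R × R} (hx : x.1 - x.2 ∈ Ideal.span {π}) : x ∈ S := by
  obtain ⟨c, hc⟩ := Ideal.mem_span_singleton'.mp hx
  have hxa : x.1 - x.2 = c * (a.1 - a.2) := by rw [hab, ← hc, mul_comm]
  rw [Prod.eq_diag_mul_add_diag_of_sub_eq hxa]
  exact S.add_mem (hstab c a ha) (hdiag _)

theorem subring_of_fiberProduct_eq_general (p : ℕ) [Fact p.Prime] (s : ℕ)
    (S : Subring (WittVector p (GaloisField p s) × WittVector p (GaloisField p s)))
    (hfib : ∀ x ∈ S, x.1 - x.2 ∈ Ideal.span {(p : WittVector p (GaloisField p s))})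
    (hdiag : ∀ w : WittVector p (GaloisField p s), (w, w) ∈ S)
    (hstab : ∀ w : WittVector p (GaloisField p s), ∀ x ∈ S, (w, w) * x ∈ S)
    (hp : ∃ x ∈ S, x.1 - x.2 = (p : WittVector p (GaloisField p s))) :
    ∀ x : WittVector p (GaloisField p s) × WittVector p (GaloisField p s),
      x ∈ S ↔ x.1 - x.2 ∈ Ideal.span {(p : WittVector p (GaloisField p s))} := by
  obtain ⟨a, ha, hab⟩ := hp
  exact fun x => ⟨hfib x, Subring.mem_of_sub_mem_span_singleton hdiag hstab ha hab⟩

/-- Let `W = W(𝔽_{p^s})` and let `W ×_k W` be the subring of `W × W`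
of pairs congruent modulo `(p)`.  If `S` is a subring of `W × W` contained in the fiber
product, containing the diagonal, stable under multiplication by diagonal elements, and
containing an element `(a, b)` with `a - b = p`, then `S` equals the fiber product. -/
theorem subring_of_fiberProduct_eq (p : ℕ) [Fact p.Prime] (s : ℕ) (hs : 0 < s)
    (S : Subring (WittVector p (GaloisField p s) × WittVector p (GaloisField p s)))
    (hfib : ∀ x ∈ S, x.1 - x.2 ∈ Ideal.span {(p : WittVector p (GaloisField p s))})
    (hdiag : ∀ w : WittVector p (GaloisField p s), (w, w) ∈ S)
    (hstab : ∀ w : WittVector p (GaloisField p s), ∀ x ∈ S, (w, w) * x ∈ S)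
    (hp : ∃ x ∈ S, x.1 - x.2 = (p : WittVector p (GaloisField p s))) :
    ∀ x : WittVector p (GaloisField p s) × WittVector p (GaloisField p s),
      x ∈ S ↔ x.1 - x.2 ∈ Ideal.span {(p : WittVector p (GaloisField p s))} :=
  subring_of_fiberProduct_eq_general p s S hfib hdiag hstab hp
end
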